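/- arXiv:2204.04920 — 3 statements merged into one kernel-verified Lean document; each statement's English description precedes it below -/
import Mathlib

section
/- Let Γ be a finite directed acyclic graph with inner nodes ordered by reachability. If Γ' is a normal subgraph of Γ, then the set L = {x : x ∉ Γ'₀ and x < y for some y ∈ Γ'₀, or x ≤ e(0) for some loose edge e of Γ'} is an initial segment of the node poset, and L is disjoint from the node set Γ'₀ of Γ'. -/
/- We model a (polarized, progressive) graph by a type `V` of inner nodes, a type
`E` of edges, and source/target maps `src tgt : E → V`. -/

/-- One step along an oriented edge. -/
def GraphStep {V E : Type*} (src tgt : E → V) (x y : V) : Prop :=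
  ∃ e : E, src e = x ∧ tgt e = y

/-- There is a directed path from `x` to `y`. -/
def Reach {V E : Type*} (src tgt : E → V) : V → V → Prop :=
  Relation.ReflTransGen (GraphStep src tgt)

/-- The graph is acyclic: the reachability preorder is antisymmetric. -/
def Acyclic {V E : Type*} (src tgt : E → V) : Prop :=
  ∀ x y : V, Reach src tgt x y → Reach src tgt y x → x = y

/-- A level of the graph: an initial segment (downward-closed subset) of the set of
inner nodes under the reachability order. -/
def IsLevel {V E : Type*} (src tgt : E → V) (L : Set V) : Prop :=
  ∀ ⦃x y : V⦄, Reach src tgt x y → y ∈ L → x ∈ L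

/-- An edge is loose in a subgraph with node set `N` if neither endpoint is in `N`. -/
def LooseIn {V E : Type*} (src tgt : E → V) (N : Set V) (e : E) : Prop :=
  src e ∉ N ∧ tgt e ∉ N

/-- A subgraph (node set `N`, edge set `Es`) is normal: (1) no directed path contains
two distinct edges of the subgraph one of which is loose; (2) every node of the
subgraph keeps all of its incident edges; (3) every directed path between two nodes
of the subgraph stays within it. -/
def NormalSubgraph {V E : Type*} (src tgt : E → V) (N : Set V) (Es : Set E) : Prop :=
  (∀ e ∈ Es, ∀ e' ∈ Es, e ≠ e' → LooseIn src tgt N e →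
      ¬ Reach src tgt (tgt e) (src e') ∧ ¬ Reach src tgt (tgt e') (src e)) ∧
  (∀ x ∈ N, ∀ e : E, src e = x ∨ tgt e = x → e ∈ Es) ∧
  (∀ x ∈ N, ∀ y ∈ N,
      (∀ e : E, Reach src tgt x (src e) → Reach src tgt (tgt e) y → e ∈ Es) ∧
      (∀ z : V, Reach src tgt x z → Reach src tgt z y → z ∈ N))

/-- An edge is cut by a level `L` if its source lies in `L` and its target outside. -/
def CutBy {V E : Type*} (src tgt : E → V) (L : Set V) (e : E) : Prop :=
  src e ∈ L ∧ tgt e ∉ L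

/-- The inner nodes of the layer `Γ[L,M]`. -/
def layerNodes {V : Type*} (L M : Set V) : Set V := M \ L

/-- The edges of the layer `Γ[L,M]`: pinned edges with both endpoints in `M \ L`,
together with the edges cut by `L` or by `M`. -/
def layerEdges {V E : Type*} (src tgt : E → V) (L M : Set V) : Set E :=
  {e | (src e ∈ M \ L ∧ tgt e ∈ M \ L) ∨ CutBy src tgt L e ∨ CutBy src tgt M e}

/-- For a normal subgraph `(N, Es)` of a finite DAG, the set
`L = {x | (x ∉ N and x < y for some y ∈ N) or x ≤ e(0) for some loose edge e of
the subgraph}` is an initial segment of the reachability order, disjoint from `N`. -/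
theorem normal_subgraph_level {V E : Type*} [Finite V] [Finite E]
    (src tgt : E → V) (hacyc : Acyclic src tgt)
    (N : Set V) (Es : Set E) (hnorm : NormalSubgraph src tgt N Es) :
    IsLevel src tgt
      {x | (x ∉ N ∧ ∃ y ∈ N, Reach src tgt x y ∧ x ≠ y) ∨
        ∃ e ∈ Es, LooseIn src tgt N e ∧ Reach src tgt x (src e)} ∧
    Disjoint
      {x | (x ∉ N ∧ ∃ y ∈ N, Reach src tgt x y ∧ x ≠ y) ∨
        ∃ e ∈ Es, LooseIn src tgt N e ∧ Reach src tgt x (src e)} N := by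
  obtain ⟨h1, h2, h3⟩ := hnorm
  constructor
  · intro x y hxy hy
    rcases hy with ⟨hyN, z, hzN, hyz, hne⟩ | ⟨e, heEs, heL, hyr⟩
    · left
      have hxN : x ∉ N := by
        intro hxN
        exact hyN ((h3 x hxN z hzN).2 y hxy hyz)
      refine ⟨hxN, z, hzN, hxy.trans hyz, ?_⟩
      rintro rfl; exact hxN hzN
    · exact Or.inr ⟨e, heEs, heL, hxy.trans hyr⟩
  · rw [Set.disjoint_left]
    rintro x (⟨hxN, -⟩ | ⟨e, heEs, heL, hxr⟩) hxN'
    · exact hxN hxN'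
    · rcases hxr.cases_head with heq | ⟨b, ⟨e', he's, he't⟩, hbr⟩
      · exact heL.1 (heq ▸ hxN')
      · have he'Es : e' ∈ Es := h2 x hxN' e' (Or.inl he's)
        have hne : e ≠ e' := by
          rintro rfl; exact heL.1 (he's ▸ hxN')
        exact (h1 e heEs e' he'Es hne heL).2 (he't ▸ hbr)
end

section
/- Let Γ be a finite directed acyclic graph with inner nodes ordered by reachability. For any pair of levels L ⊆ M of the node poset, the layer Γ[L,M] is a normal subgraph of Γ. -/
theorem Reach.of_edge {V E : Type*} {src tgt : E → V} (e : E) : Reach src tgt (src e) (tgt e) :=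
  Relation.ReflTransGen.single ⟨e, rfl, rfl⟩

section Layer

variable {V E : Type*} {src tgt : E → V} {L M : Set V}

theorem src_mem_of_mem_layerEdges (hLM : L ⊆ M) {e : E} (he : e ∈ layerEdges src tgt L M) :
    src e ∈ M := by
  rcases he with ⟨⟨h, _⟩, _⟩ | ⟨h, _⟩ | ⟨h, _⟩
  · exact h
  · exact hLM h
  · exact h

theorem tgt_notMem_of_mem_layerEdges (hLM : L ⊆ M) {e : E} (he : e ∈ layerEdges src tgt L M) :
    tgt e ∉ L := by
  rcases he with ⟨_, _, h⟩ | ⟨_, h⟩ | ⟨_, h⟩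
  · exact h
  · exact h
  · exact fun h' => h (hLM h')

theorem LooseIn.of_mem_layerEdges {e : E} (he : e ∈ layerEdges src tgt L M)
    (hloose : LooseIn src tgt (layerNodes L M) e) : src e ∈ L ∧ tgt e ∉ M := by
  obtain ⟨hs', ht'⟩ := hloose
  rcases he with ⟨hs, _⟩ | ⟨hs, ht⟩ | ⟨hs, ht⟩
  · exact absurd hs hs'
  · exact ⟨hs, fun htM => ht' ⟨htM, ht⟩⟩
  · exact ⟨by_contra fun hsL => hs' ⟨hs, hsL⟩, ht⟩

theorem IsLevel.mem_layerNodes_of_reach (hL : IsLevel src tgt L) (hM : IsLevel src tgt M)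
    {x y z : V} (hx : x ∈ layerNodes L M) (hy : y ∈ layerNodes L M)
    (hxz : Reach src tgt x z) (hzy : Reach src tgt z y) : z ∈ layerNodes L M :=
  ⟨hM hzy hy.1, fun hz => hx.2 (hL hxz hz)⟩

theorem IsLevel.mem_layerEdges_of_src_mem (hL : IsLevel src tgt L) {e : E}
    (he : src e ∈ layerNodes L M) : e ∈ layerEdges src tgt L M := by
  have htL : tgt e ∉ L := fun h => he.2 (hL (Reach.of_edge e) h)
  by_cases htM : tgt e ∈ M
  · exact Or.inl ⟨he, htM, htL⟩
  · exact Or.inr (Or.inr ⟨he.1, htM⟩)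

theorem IsLevel.mem_layerEdges_of_tgt_mem (hM : IsLevel src tgt M) {e : E}
    (he : tgt e ∈ layerNodes L M) : e ∈ layerEdges src tgt L M := by
  by_cases hsL : src e ∈ L
  · exact Or.inr (Or.inl ⟨hsL, he.2⟩)
  · exact Or.inl ⟨⟨hM (Reach.of_edge e) he.1, hsL⟩, he⟩

/-- A loose edge of the layer leaves `L` and lands outside `M`, while every layer edge
starts inside `M` and ends outside `L`; a path between two such edges would leave a level. -/
theorem IsLevel.not_reach_of_looseIn_layer (hL : IsLevel src tgt L) (hM : IsLevel src tgt M)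
    (hLM : L ⊆ M) {e e' : E} (he : e ∈ layerEdges src tgt L M) (he' : e' ∈ layerEdges src tgt L M)
    (hloose : LooseIn src tgt (layerNodes L M) e) :
    ¬ Reach src tgt (tgt e) (src e') ∧ ¬ Reach src tgt (tgt e') (src e) := by
  obtain ⟨hsL, htM⟩ := hloose.of_mem_layerEdges he
  exact ⟨fun hr => htM (hM hr (src_mem_of_mem_layerEdges hLM he')),
    fun hr => tgt_notMem_of_mem_layerEdges hLM he' (hL hr hsL)⟩

theorem IsLevel.mem_layerEdges_of_reach (hL : IsLevel src tgt L) (hM : IsLevel src tgt M)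
    {x y : V} (hx : x ∈ layerNodes L M) (hy : y ∈ layerNodes L M) {e : E}
    (hxe : Reach src tgt x (src e)) (hey : Reach src tgt (tgt e) y) :
    e ∈ layerEdges src tgt L M :=
  Or.inl ⟨hL.mem_layerNodes_of_reach hM hx hy hxe ((Reach.of_edge e).trans hey),
    hL.mem_layerNodes_of_reach hM hx hy (hxe.trans (Reach.of_edge e)) hey⟩

end Layer

theorem layer_is_normal_general {V E : Type*}
    (src tgt : E → V)
    (L M : Set V) (hL : IsLevel src tgt L) (hM : IsLevel src tgt M) (hLM : L ⊆ M) :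
    NormalSubgraph src tgt (layerNodes L M) (layerEdges src tgt L M) := by
  refine ⟨fun e he e' he' _ hloose => hL.not_reach_of_looseIn_layer hM hLM he he' hloose,
    ?_, fun x hx y hy => ⟨fun e => hL.mem_layerEdges_of_reach hM hx hy,
      fun z => hL.mem_layerNodes_of_reach hM hx hy⟩⟩
  rintro x hx e (rfl | rfl)
  · exact hL.mem_layerEdges_of_src_mem hx
  · exact hM.mem_layerEdges_of_tgt_mem hx

/-- For any pair of levels `L ⊆ M` of a finite DAG, the layer
`Γ[L,M]` is a normal subgraph of `Γ`. -/
theorem layer_is_normal {V E : Type*} [Finite V] [Finite E]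
    (src tgt : E → V) (hacyc : Acyclic src tgt)
    (L M : Set V) (hL : IsLevel src tgt L) (hM : IsLevel src tgt M) (hLM : L ⊆ M) :
    NormalSubgraph src tgt (layerNodes L M) (layerEdges src tgt L M) :=
  layer_is_normal_general src tgt L M hL hM hLM
end

section
/- T-equivalence of anchored diagrams is a monoidal congruence: if [Γ] ~_T [Γ'] and [Υ] ~_T [Υ'] then [Υ] ⊗ [Γ] ~_T [Υ'] ⊗ [Γ'], and if the compositions are defined, [Υ] ∘ [Γ] ~_T [Υ'] ∘ [Γ']. -/
open CategoryTheory MonoidalCategory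

/- We work in an abstract symmetric monoidal category `C` (standing for the free
symmetric monoidal category `F_s(G)` of anchored diagrams). A symmetric set of
templates is a family `T` of pairs of parallel morphisms. By the decomposition of
surgeries (Lemma `sur:decom`), performing a `T`-surgery on a morphism means
rewriting `g ≫ (ω ▷ Z) ≫ h` to `g ≫ (lam ▷ Z) ≫ h` for some template `(ω, lam)`,
where `Z` collects the untouched strands. -/

/-- One `T`-surgery step. -/
def SurgeryStep {C : Type*} [Category C] [MonoidalCategory C]
    (T : ∀ ⦃X Y : C⦄, (X ⟶ Y) → (X ⟶ Y) → Prop)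
    ⦃X Y : C⦄ (f f' : X ⟶ Y) : Prop :=
  ∃ (A B Z : C) (g : X ⟶ A ⊗ Z) (ω lam : A ⟶ B) (h : B ⊗ Z ⟶ Y),
    T ω lam ∧ f = g ≫ (ω ▷ Z) ≫ h ∧ f' = g ≫ (lam ▷ Z) ≫ h

/-- `T`-equivalence: a finite sequence of `T`-surgeries. -/
def TEquiv {C : Type*} [Category C] [MonoidalCategory C]
    (T : ∀ ⦃X Y : C⦄, (X ⟶ Y) → (X ⟶ Y) → Prop)
    ⦃X Y : C⦄ : (X ⟶ Y) → (X ⟶ Y) → Prop :=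
  Relation.ReflTransGen (fun f f' => SurgeryStep T f f')

/-! A surgery is local: its context `g`, `h` and the idle strands `Z` absorb any morphism
composed or tensored around it, so each single step survives composition and whiskering,
and `T`-equivalence follows step by step. A tensor product `u ⊗ₘ f` is the composite of
the whiskerings `u ▷ X` and `W ◁ f`; the left whiskering is reduced to the right one by
conjugating with the braiding. -/

lemma whiskerLeft_eq_braiding_conj {C : Type*} [Category C] [MonoidalCategory C]
    [BraidedCategory C] {X Y : C} (W : C) (f : X ⟶ Y) :
    W ◁ f = (β_ W X).hom ≫ (f ▷ W) ≫ (β_ W Y).inv := by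
  rw [← Category.assoc, Iso.eq_comp_inv, BraidedCategory.braiding_naturality_right]

namespace SurgeryStep

variable {C : Type*} [Category C] [MonoidalCategory C]
  {T : ∀ ⦃X Y : C⦄, (X ⟶ Y) → (X ⟶ Y) → Prop} {X Y : C} {f f' : X ⟶ Y}

lemma comp_left {X' : C} (e : X' ⟶ X) (h : SurgeryStep T f f') :
    SurgeryStep T (e ≫ f) (e ≫ f') := by
  obtain ⟨A, B, Z, g, ω, lam, k, hT, rfl, rfl⟩ := h
  exact ⟨A, B, Z, e ≫ g, ω, lam, k, hT, by simp, by simp⟩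

lemma comp_right {Y' : C} (e : Y ⟶ Y') (h : SurgeryStep T f f') :
    SurgeryStep T (f ≫ e) (f' ≫ e) := by
  obtain ⟨A, B, Z, g, ω, lam, k, hT, rfl, rfl⟩ := h
  exact ⟨A, B, Z, g, ω, lam, k ≫ e, hT, by simp, by simp⟩

lemma whiskerRight (W : C) (h : SurgeryStep T f f') :
    SurgeryStep T (f ▷ W) (f' ▷ W) := by
  obtain ⟨A, B, Z, g, ω, lam, k, hT, rfl, rfl⟩ := h
  exact ⟨A, B, Z ⊗ W, (g ▷ W) ≫ (α_ A Z W).hom, ω, lam, (α_ B Z W).inv ≫ (k ▷ W), hT,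
    by simp, by simp⟩

lemma whiskerLeft [BraidedCategory C] (W : C) (h : SurgeryStep T f f') :
    SurgeryStep T (W ◁ f) (W ◁ f') := by
  rw [whiskerLeft_eq_braiding_conj, whiskerLeft_eq_braiding_conj]
  exact comp_left _ (comp_right _ (h.whiskerRight W))

end SurgeryStep

namespace TEquiv

variable {C : Type*} [Category C] [MonoidalCategory C]
  {T : ∀ ⦃X Y : C⦄, (X ⟶ Y) → (X ⟶ Y) → Prop}

lemma comp {X Y Z : C} {f f' : X ⟶ Y} {u u' : Y ⟶ Z} (hf : TEquiv T f f')
    (hu : TEquiv T u u') : TEquiv T (f ≫ u) (f' ≫ u') :=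
  (hf.lift (· ≫ u) fun _ _ h => h.comp_right u).trans
    (hu.lift (f' ≫ ·) fun _ _ h => h.comp_left f')

lemma tensorHom [BraidedCategory C] {X Y Z W : C} {f f' : X ⟶ Y} {u u' : Z ⟶ W}
    (hf : TEquiv T f f') (hu : TEquiv T u u') : TEquiv T (u ⊗ₘ f) (u' ⊗ₘ f') := by
  rw [MonoidalCategory.tensorHom_def, MonoidalCategory.tensorHom_def]
  exact comp (hu.lift (· ▷ X) fun _ _ h => h.whiskerRight X)
    (hf.lift (W ◁ ·) fun _ _ h => h.whiskerLeft W)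

end TEquiv

theorem tEquiv_monoidal_congruence_general {C : Type*} [Category C] [MonoidalCategory C]
    [SymmetricCategory C]
    (T : ∀ ⦃X Y : C⦄, (X ⟶ Y) → (X ⟶ Y) → Prop) :
    (∀ {X Y Z W : C} (f f' : X ⟶ Y) (u u' : Z ⟶ W),
        TEquiv T f f' → TEquiv T u u' → TEquiv T (u ⊗ₘ f) (u' ⊗ₘ f')) ∧
    (∀ {X Y Z : C} (f f' : X ⟶ Y) (u u' : Y ⟶ Z),
        TEquiv T f f' → TEquiv T u u' → TEquiv T (f ≫ u) (f' ≫ u')) :=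
  ⟨fun _ _ _ _ => TEquiv.tensorHom, fun _ _ _ _ => TEquiv.comp⟩

/-- `T`-equivalence of (isomorphism classes of) anchored diagrams is
a monoidal congruence: it is compatible with the monoidal product and with
composition. -/
theorem tEquiv_monoidal_congruence {C : Type*} [Category C] [MonoidalCategory C]
    [SymmetricCategory C]
    (T : ∀ ⦃X Y : C⦄, (X ⟶ Y) → (X ⟶ Y) → Prop)
    (hsymm : ∀ ⦃X Y : C⦄ (f g : X ⟶ Y), T f g → T g f) :
    (∀ {X Y Z W : C} (f f' : X ⟶ Y) (u u' : Z ⟶ W),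
        TEquiv T f f' → TEquiv T u u' → TEquiv T (u ⊗ₘ f) (u' ⊗ₘ f')) ∧
    (∀ {X Y Z : C} (f f' : X ⟶ Y) (u u' : Y ⟶ Z),
        TEquiv T f f' → TEquiv T u u' → TEquiv T (f ≫ u) (f' ≫ u')) :=
  tEquiv_monoidal_congruence_general T
end
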